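/- Let D₀ be the perfectly calibrated distribution with v uniform on {u_i}_{i∈[t]} ⊂ [1/3,2/3] and E[y|v]=v, and for θ ∈ {−1,1}^t let D_θ satisfy E[y | v = u_i] = u_i + θ_i α for α ∈ (0,1/3). Then the total variation distance between D₀^⊗n and the uniform mixture E_θ[D_θ^⊗n] is at most (1/2)·sqrt(exp(11 α⁴ n²/t) − 1). -/

import Mathlib

open MeasureTheory
open scoped ENNReal

noncomputable section

/-- The distribution of `(v, y) ∈ [0,1] × {0,1}` with `v` uniform over `{u i}` and
`Pr[y = 1 | v = u i] = p i`. -/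
def bernMix (t : ℕ) (u p : Fin t → ℝ) : Measure (ℝ × Bool) :=
  ENNReal.ofReal (1 / t) •
    ∑ i : Fin t,
      (ENNReal.ofReal (p i) • Measure.dirac (u i, true) +
        ENNReal.ofReal (1 - p i) • Measure.dirac (u i, false))

/-- The total variation distance between two measures. -/
def tvDist {Ω : Type*} [MeasurableSpace Ω] (μ ν : Measure Ω) : ℝ :=
  ⨆ S : {S : Set Ω // MeasurableSet S}, |(μ S.1).toReal - (ν S.1).toReal|

/-!
Both measures are pushforwards, under `(i, b) ↦ (u i, b)` applied coordinatewise, of measures on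
the finite set `(Fin t × Bool)ⁿ` with densities `P` (the calibrated product) and `Q` (the uniform
mixture over `θ` of the perturbed products). For finite densities,
`d_TV ≤ ½‖P - Q‖₁ ≤ ½ √χ²(Q ‖ P)` by Cauchy–Schwarz. By Ingster's method,
`χ² + 1 = 𝔼_{θ,θ'} (∑ₓ P_θ(x) P_θ'(x) / P(x))ⁿ = 𝔼_{θ,θ'} (1 + (α²/t) ∑ᵢ θᵢθ'ᵢ cᵢ)ⁿ` with
`cᵢ = 1/(uᵢ(1 - uᵢ)) ≤ 9/2`. Bounding `1 + x ≤ eˣ` and averaging over the independent signs gives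
`∏ᵢ cosh aᵢ` with `aᵢ = n α² cᵢ / t`, and Hoeffding's lemma `cosh a ≤ exp (a²/2)` yields
`exp (∑ᵢ aᵢ²/2) ≤ exp (81/8 · α⁴ n²/t)`.
-/

open Real

section FiniteDistributions

variable {X : Type*} [Fintype X]

def chiSq (P Q : X → ℝ) : ℝ := ∑ x, Q x ^ 2 / P x - 1

lemma chiSq_eq_sum_sq_sub_div {P Q : X → ℝ} (hP : ∀ x, 0 < P x) (hP1 : ∑ x, P x = 1)
    (hQ1 : ∑ x, Q x = 1) : chiSq P Q = ∑ x, (P x - Q x) ^ 2 / P x := by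
  have h : ∀ x, (P x - Q x) ^ 2 / P x = Q x ^ 2 / P x - 2 * Q x + P x := fun x => by
    field_simp [(hP x).ne']; ring
  simp only [chiSq, h, Finset.sum_add_distrib, Finset.sum_sub_distrib, ← Finset.mul_sum, hP1, hQ1]
  ring

lemma sum_abs_sub_le_sqrt_chiSq {P Q : X → ℝ} (hP : ∀ x, 0 < P x) (hP1 : ∑ x, P x = 1)
    (hQ1 : ∑ x, Q x = 1) : ∑ x, |P x - Q x| ≤ √(chiSq P Q) := by
  have := Finset.sq_sum_div_le_sum_sq_div Finset.univ (fun x => |P x - Q x|) fun x _ => hP x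
  simp only [hP1, div_one, sq_abs] at this
  rw [chiSq_eq_sum_sq_sub_div hP hP1 hQ1]
  exact le_sqrt_of_sq_le this

lemma abs_sum_indicator_le_half_sum_abs {d : X → ℝ} (h0 : ∑ x, d x = 0) (A : Set X) :
    |∑ x, A.indicator d x| ≤ 1 / 2 * ∑ x, |d x| := by
  have hcompl : ∑ x, Aᶜ.indicator d x = -∑ x, A.indicator d x := by
    rw [eq_neg_iff_add_eq_zero, ← Finset.sum_add_distrib, ← h0]
    simp only [Set.indicator_compl_add_self_apply]
  have habs : ∑ x, |d x| = ∑ x, |A.indicator d x| + ∑ x, |Aᶜ.indicator d x| := by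
    rw [← Finset.sum_add_distrib]
    congr! 1 with x
    by_cases hx : x ∈ A <;> simp [hx]
  have h1 := Finset.abs_sum_le_sum_abs (fun x => A.indicator d x) Finset.univ
  have h2 := Finset.abs_sum_le_sum_abs (fun x => Aᶜ.indicator d x) Finset.univ
  rw [hcompl, abs_neg] at h2
  linarith

lemma sum_prod_eq_one {w : X → ℝ} (hw : ∑ x, w x = 1) (n : ℕ) :
    ∑ y : Fin n → X, ∏ k, w (y k) = 1 := by
  rw [← Fintype.sum_pow, hw, one_pow]

lemma sum_sq_mixture_div_prod {Θ : Type*} [Fintype Θ] (n : ℕ) (c : ℝ)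
    (w : Θ → X → ℝ) (p : X → ℝ) :
    ∑ y : Fin n → X, (c * ∑ θ, ∏ k, w θ (y k)) ^ 2 / ∏ k, p (y k)
      = c ^ 2 * ∑ θ, ∑ θ', (∑ x, w θ x * w θ' x / p x) ^ n := by
  have hy : ∀ y : Fin n → X, (c * ∑ θ, ∏ k, w θ (y k)) ^ 2 / ∏ k, p (y k)
      = c ^ 2 * ∑ θ, ∑ θ', ∏ k, (w θ (y k) * w θ' (y k) / p (y k)) := fun y => by
    simp only [mul_pow, sq (∑ θ, _), Finset.sum_mul_sum, mul_div_assoc, Finset.sum_div,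
      Finset.prod_div_distrib, Finset.prod_mul_distrib]
  rw [Finset.sum_congr rfl fun y _ => hy y, ← Finset.mul_sum, Finset.sum_comm]
  congr 1
  refine Finset.sum_congr rfl fun θ _ => ?_
  rw [Finset.sum_comm]
  exact Finset.sum_congr rfl fun θ' _ => (Fintype.sum_pow (fun x => w θ x * w θ' x / p x) n).symm

end FiniteDistributions

section WeightedDirac

variable {X : Type*} [Fintype X] [MeasurableSpace X] [MeasurableSingletonClass X]

def weightedDirac (w : X → ℝ) : Measure X :=
  ∑ x, ENNReal.ofReal (w x) • Measure.dirac x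

lemma weightedDirac_apply (w : X → ℝ) (s : Set X) :
    weightedDirac w s = ∑ x, s.indicator (fun x => ENNReal.ofReal (w x)) x := by
  simp only [weightedDirac, Measure.finsetSum_apply, Measure.smul_apply,
    Measure.dirac_apply' _ (Set.toFinite s).measurableSet, smul_eq_mul]
  congr! 1 with x
  by_cases hx : x ∈ s <;> simp [hx]

instance (w : X → ℝ) : IsFiniteMeasure (weightedDirac w) :=
  ⟨by simp [weightedDirac_apply]⟩

lemma weightedDirac_singleton (w : X → ℝ) (x : X) :
    weightedDirac w {x} = ENNReal.ofReal (w x) := by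
  rw [weightedDirac_apply, Finset.sum_eq_single x (fun y _ hy => by simp [hy]) (by simp)]
  simp

lemma toReal_weightedDirac_apply {w : X → ℝ} (hw : ∀ x, 0 ≤ w x) (s : Set X) :
    (weightedDirac w s).toReal = ∑ x, s.indicator w x := by
  rw [weightedDirac_apply, ENNReal.toReal_sum fun x _ => by by_cases hx : x ∈ s <;> simp [hx]]
  congr! 1 with x
  by_cases hx : x ∈ s <;> simp [hx, hw x]

lemma pi_weightedDirac {ι : Type*} [Fintype ι] [DecidableEq ι] {w : ι → X → ℝ}
    (hw : ∀ i x, 0 ≤ w i x) :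
    Measure.pi (fun i => weightedDirac (w i)) = weightedDirac (fun y => ∏ i, w i (y i)) := by
  refine Measure.ext_iff_singleton.mpr fun y => ?_
  rw [← Set.univ_pi_singleton, Measure.pi_pi, Set.univ_pi_singleton, weightedDirac_singleton,
    ENNReal.ofReal_prod_of_nonneg fun i _ => hw i (y i)]
  simp only [weightedDirac_singleton]

lemma smul_sum_weightedDirac {Θ : Type*} [Fintype Θ] {c : ℝ} (hc : 0 ≤ c) {w : Θ → X → ℝ}
    (hw : ∀ θ x, 0 ≤ w θ x) :
    ENNReal.ofReal c • ∑ θ, weightedDirac (w θ) = weightedDirac (fun x => c * ∑ θ, w θ x) := by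
  refine Measure.ext_iff_singleton.mpr fun x => ?_
  simp only [Measure.smul_apply, Measure.finsetSum_apply, weightedDirac_singleton, smul_eq_mul]
  rw [ENNReal.ofReal_mul hc, ENNReal.ofReal_sum_of_nonneg fun θ _ => hw θ x]

lemma map_weightedDirac {Y : Type*} [MeasurableSpace Y] (w : X → ℝ) (f : X → Y) :
    (weightedDirac w).map f = ∑ x, ENNReal.ofReal (w x) • Measure.dirac (f x) := by
  have hf : Measurable f := measurable_of_countable f
  simp only [weightedDirac, Measure.map_finset_sum' hf.aemeasurable, Measure.map_smul,
    Measure.map_dirac' hf]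

lemma tvDist_map_weightedDirac_le {Y : Type*} [MeasurableSpace Y] (f : X → Y) {P Q : X → ℝ}
    (hP : ∀ x, 0 < P x) (hQ : ∀ x, 0 ≤ Q x) (hP1 : ∑ x, P x = 1) (hQ1 : ∑ x, Q x = 1) :
    tvDist ((weightedDirac P).map f) ((weightedDirac Q).map f) ≤ 1 / 2 * √(chiSq P Q) := by
  refine Real.iSup_le (fun ⟨S, hS⟩ => ?_) (by positivity)
  have hf : Measurable f := measurable_of_countable f
  simp only [Measure.map_apply hf hS, toReal_weightedDirac_apply (fun x => (hP x).le),
    toReal_weightedDirac_apply hQ, ← Finset.sum_sub_distrib, ← Set.indicator_sub]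
  calc |∑ x, (f ⁻¹' S).indicator (P - Q) x|
      ≤ 1 / 2 * ∑ x, |P x - Q x| :=
        abs_sum_indicator_le_half_sum_abs (by simp [Finset.sum_sub_distrib, hP1, hQ1]) _
    _ ≤ 1 / 2 * √(chiSq P Q) := by gcongr; exact sum_abs_sub_le_sqrt_chiSq hP hP1 hQ1

end WeightedDirac

section BernoulliModel

variable {t : ℕ}

def bernWeight (p : Fin t → ℝ) (x : Fin t × Bool) : ℝ :=
  1 / t * if x.2 then p x.1 else 1 - p x.1

lemma bernMix_eq_map (u p : Fin t → ℝ) :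
    bernMix t u p = (weightedDirac (bernWeight p)).map fun x => (u x.1, x.2) := by
  simp only [map_weightedDirac, bernWeight, Fintype.sum_prod_type, Fintype.sum_bool, if_true,
    Bool.false_eq_true, if_false, ENNReal.ofReal_mul (one_div_nonneg.mpr t.cast_nonneg),
    mul_smul, bernMix, Finset.smul_sum, smul_add]

lemma pi_bernMix_eq_map {n : ℕ} (u : Fin t → ℝ) {p : Fin t → ℝ}
    (hp : ∀ x, 0 ≤ bernWeight p x) :
    Measure.pi (fun _ : Fin n => bernMix t u p)
      = (weightedDirac fun y : Fin n → Fin t × Bool => ∏ k, bernWeight p (y k)).map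
          fun y k => (u (y k).1, (y k).2) := by
  simp_rw [bernMix_eq_map]
  rw [← Measure.pi_map_pi fun _ => (measurable_of_countable _).aemeasurable,
    pi_weightedDirac fun _ => hp]

lemma bernWeight_pos (ht : 0 < t) {p : Fin t → ℝ} (hp : ∀ i, p i ∈ Set.Ioo (0 : ℝ) 1)
    (x : Fin t × Bool) : 0 < bernWeight p x := by
  obtain ⟨h0, h1⟩ := hp x.1
  unfold bernWeight
  split_ifs <;> exact mul_pos (by positivity) (by linarith)

lemma sum_bernWeight (ht : 0 < t) (p : Fin t → ℝ) : ∑ x, bernWeight p x = 1 := by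
  simp only [bernWeight, Fintype.sum_prod_type, Fintype.sum_bool, if_true, Bool.false_eq_true,
    if_false, ← mul_add, add_sub_cancel, mul_one, Finset.sum_const, Finset.card_univ,
    Fintype.card_fin, nsmul_eq_mul]
  field_simp

lemma sum_bernWeight_mul_div (ht : 0 < t) (p q : Fin t → ℝ) {r : Fin t → ℝ}
    (hr : ∀ i, r i ≠ 0 ∧ 1 - r i ≠ 0) :
    ∑ x, bernWeight p x * bernWeight q x / bernWeight r x
      = 1 + 1 / t * ∑ i, (p i - r i) * (q i - r i) / (r i * (1 - r i)) := by
  have hi : ∀ i, ∑ b : Bool, bernWeight p (i, b) * bernWeight q (i, b) / bernWeight r (i, b)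
      = 1 / t * (1 + (p i - r i) * (q i - r i) / (r i * (1 - r i))) := fun i => by
    simp only [bernWeight, Fintype.sum_bool, if_true, Bool.false_eq_true, if_false]
    field_simp [(hr i).1, (hr i).2]
    ring
  rw [Fintype.sum_prod_type, Finset.sum_congr rfl fun i _ => hi i, ← Finset.mul_sum,
    Finset.sum_add_distrib, Finset.sum_const, Finset.card_univ, Fintype.card_fin, nsmul_eq_mul]
  field_simp

end BernoulliModel

lemma one_add_pow_le_exp_mul {x : ℝ} (hx : -1 ≤ x) (n : ℕ) : (1 + x) ^ n ≤ exp (n * x) := by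
  rw [exp_nat_mul]
  exact pow_le_pow_left₀ (by linarith) (by linarith [add_one_le_exp x]) n

lemma two_ninths_le_mul_one_sub {u : ℝ} (hu : u ∈ Set.Icc (1 / 3 : ℝ) (2 / 3)) :
    2 / 9 ≤ u * (1 - u) := by
  nlinarith [hu.1, hu.2]

def boolSign (b : Bool) : ℝ := if b then 1 else -1

lemma abs_boolSign (b : Bool) : |boolSign b| = 1 := by
  cases b <;> simp [boolSign]

lemma sum_sum_exp_boolSign_mul {ι : Type*} [Fintype ι] [DecidableEq ι] (a : ι → ℝ) :
    ∑ θ : ι → Bool, ∑ θ' : ι → Bool, exp (∑ i, a i * (boolSign (θ i) * boolSign (θ' i)))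
      = 4 ^ Fintype.card ι * ∏ i, cosh (a i) := by
  have hθ : ∀ θ : ι → Bool,
      ∑ θ' : ι → Bool, exp (∑ i, a i * (boolSign (θ i) * boolSign (θ' i)))
        = ∏ i, ∑ b, exp (a i * (boolSign (θ i) * boolSign b)) := fun θ => by
    simp_rw [exp_sum]
    exact (Fintype.prod_sum fun i b => exp (a i * (boolSign (θ i) * boolSign b))).symm
  rw [Finset.sum_congr rfl fun θ _ => hθ θ,
    ← Fintype.prod_sum fun i b => ∑ b', exp (a i * (boolSign b * boolSign b')),
    ← Finset.card_univ, Finset.pow_card_mul_prod]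
  refine Finset.prod_congr rfl fun i _ => ?_
  simp only [Fintype.sum_bool, boolSign, if_true, Bool.false_eq_true, if_false, cosh_eq]
  ring_nf

section SignPerturbation

variable {t : ℕ}

/-- The conditional means `uᵢ + θᵢ α` of `D_θ`, with `θ ∈ {-1, 1}ᵗ` encoded by `Bool`. -/
def perturb (u : Fin t → ℝ) (α : ℝ) (θ : Fin t → Bool) : Fin t → ℝ :=
  fun i => u i + boolSign (θ i) * α

def perturbMixture (u : Fin t → ℝ) (α : ℝ) (n : ℕ) (y : Fin n → Fin t × Bool) : ℝ :=
  (2 ^ t : ℝ)⁻¹ * ∑ θ : Fin t → Bool, ∏ k, bernWeight (perturb u α θ) (y k)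

variable {u : Fin t → ℝ} {α : ℝ}

lemma perturb_mem_Ioo (hu : ∀ i, u i ∈ Set.Icc (1 / 3 : ℝ) (2 / 3)) (hα : |α| < 1 / 3)
    (θ : Fin t → Bool) (i : Fin t) : perturb u α θ i ∈ Set.Ioo (0 : ℝ) 1 := by
  have hs : |boolSign (θ i) * α| < 1 / 3 := by rwa [abs_mul, abs_boolSign, one_mul]
  obtain ⟨h1, h2⟩ := abs_lt.mp hs
  exact ⟨by simp only [perturb]; linarith [(hu i).1], by simp only [perturb]; linarith [(hu i).2]⟩

lemma perturbMixture_nonneg (ht : 0 < t) (hu : ∀ i, u i ∈ Set.Icc (1 / 3 : ℝ) (2 / 3))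
    (hα : |α| < 1 / 3) {n : ℕ} (y : Fin n → Fin t × Bool) : 0 ≤ perturbMixture u α n y :=
  mul_nonneg (by positivity) <| Finset.sum_nonneg fun θ _ => Finset.prod_nonneg fun k _ =>
    (bernWeight_pos ht (perturb_mem_Ioo hu hα θ) _).le

lemma sum_perturbMixture (ht : 0 < t) (n : ℕ) : ∑ y, perturbMixture u α n y = 1 := by
  simp only [perturbMixture, ← Finset.mul_sum]
  rw [Finset.sum_comm]
  simp [sum_prod_eq_one (sum_bernWeight ht _)]

lemma smul_sum_pi_bernMix_eq_map (ht : 0 < t) (hu : ∀ i, u i ∈ Set.Icc (1 / 3 : ℝ) (2 / 3))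
    (hα : |α| < 1 / 3) (n : ℕ) :
    ((2 : ℝ≥0∞) ^ t)⁻¹ • ∑ θ : Fin t → Bool,
        Measure.pi (fun _ : Fin n => bernMix t u (perturb u α θ))
      = (weightedDirac (perturbMixture u α n)).map fun y k => (u (y k).1, (y k).2) := by
  have hw : ∀ θ x, 0 ≤ bernWeight (perturb u α θ) x := fun θ x =>
    (bernWeight_pos ht (perturb_mem_Ioo hu hα θ) x).le
  rw [← ENNReal.ofReal_ofNat, ← ENNReal.ofReal_pow (by norm_num),
    ← ENNReal.ofReal_inv_of_pos (by positivity)]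
  simp_rw [pi_bernMix_eq_map u (hw _)]
  rw [← Measure.map_finset_sum' (measurable_of_countable _).aemeasurable, ← Measure.map_smul,
    smul_sum_weightedDirac (by positivity) fun θ y => Finset.prod_nonneg fun k _ => hw θ _]
  rfl

lemma one_add_pow_le_exp_sum_boolSign (ht : 0 < t) (hu : ∀ i, u i ∈ Set.Icc (1 / 3 : ℝ) (2 / 3))
    (hα : α ^ 2 ≤ 2 / 9) (n : ℕ) (θ θ' : Fin t → Bool) :
    (1 + 1 / t * ∑ i, boolSign (θ i) * α * (boolSign (θ' i) * α) / (u i * (1 - u i))) ^ n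
      ≤ exp (∑ i, n * α ^ 2 / (t * (u i * (1 - u i))) * (boolSign (θ i) * boolSign (θ' i))) := by
  have hterm : ∀ i, -1 ≤ boolSign (θ i) * α * (boolSign (θ' i) * α) / (u i * (1 - u i)) := by
    intro i
    have hv := two_ninths_le_mul_one_sub (hu i)
    have hs : 0 ≤ 1 + boolSign (θ i) * boolSign (θ' i) := by
      cases θ i <;> cases θ' i <;> norm_num [boolSign]
    rw [le_div_iff₀ (by linarith)]
    nlinarith [mul_nonneg hs (sq_nonneg α)]
  have hlow :
      -1 ≤ 1 / t * ∑ i, boolSign (θ i) * α * (boolSign (θ' i) * α) / (u i * (1 - u i)) := by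
    have hsum := Finset.sum_le_sum fun i (_ : i ∈ Finset.univ) => hterm i
    rw [Finset.sum_const, Finset.card_univ, Fintype.card_fin, nsmul_eq_mul, mul_neg_one] at hsum
    rw [one_div_mul_eq_div, le_div_iff₀ (Nat.cast_pos.mpr ht)]
    linarith
  refine (one_add_pow_le_exp_mul hlow n).trans_eq ?_
  rw [Finset.mul_sum, Finset.mul_sum]
  congr! 2 with i
  field_simp

lemma sum_sq_div_two_le (ht : 0 < t) (hu : ∀ i, u i ∈ Set.Icc (1 / 3 : ℝ) (2 / 3)) (n : ℕ) :
    ∑ i, (n * α ^ 2 / (t * (u i * (1 - u i)))) ^ 2 / 2 ≤ 11 * α ^ 4 * n ^ 2 / t := by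
  have hi : ∀ i,
      (n * α ^ 2 / (t * (u i * (1 - u i)))) ^ 2 / 2 ≤ (n * α ^ 2 / t) ^ 2 * (81 / 8) := by
    intro i
    have hv := two_ninths_le_mul_one_sub (hu i)
    calc (n * α ^ 2 / (t * (u i * (1 - u i)))) ^ 2 / 2
        = (n * α ^ 2 / t) ^ 2 * (1 / (2 * (u i * (1 - u i)) ^ 2)) := by
          field_simp
      _ ≤ (n * α ^ 2 / t) ^ 2 * (81 / 8) := by
          refine mul_le_mul_of_nonneg_left ?_ (sq_nonneg _)
          rw [div_le_iff₀ (by positivity)]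
          nlinarith
  calc ∑ i, (n * α ^ 2 / (t * (u i * (1 - u i)))) ^ 2 / 2
      ≤ ∑ _i : Fin t, (n * α ^ 2 / t) ^ 2 * (81 / 8) := Finset.sum_le_sum fun i _ => hi i
    _ = 81 / 8 * α ^ 4 * n ^ 2 / t := by
      rw [Finset.sum_const, Finset.card_univ, Fintype.card_fin, nsmul_eq_mul]
      field_simp
    _ ≤ 11 * α ^ 4 * n ^ 2 / t := by gcongr; norm_num

lemma chiSq_perturbMixture_le (ht : 0 < t) (hu : ∀ i, u i ∈ Set.Icc (1 / 3 : ℝ) (2 / 3))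
    (hα : α ^ 2 ≤ 2 / 9) (n : ℕ) :
    chiSq (fun y : Fin n → Fin t × Bool => ∏ k, bernWeight u (y k)) (perturbMixture u α n)
      ≤ exp (11 * α ^ 4 * n ^ 2 / t) - 1 := by
  set a : Fin t → ℝ := fun i => n * α ^ 2 / (t * (u i * (1 - u i)))
  have hvar : ∀ i, u i ≠ 0 ∧ 1 - u i ≠ 0 := fun i => by
    obtain ⟨h1, h2⟩ := hu i
    constructor <;> linarith
  have hpair : ∀ θ θ' : Fin t → Bool,
      ∑ x, bernWeight (perturb u α θ) x * bernWeight (perturb u α θ') x / bernWeight u x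
        = 1 + 1 / t * ∑ i, boolSign (θ i) * α * (boolSign (θ' i) * α) / (u i * (1 - u i)) := by
    intro θ θ'
    simp only [sum_bernWeight_mul_div ht _ _ hvar, perturb, add_sub_cancel_left]
  simp only [chiSq, perturbMixture]
  rw [sub_le_sub_iff_right, sum_sq_mixture_div_prod]
  calc ((2 ^ t : ℝ)⁻¹) ^ 2 * ∑ θ, ∑ θ', (∑ x, bernWeight (perturb u α θ) x
          * bernWeight (perturb u α θ') x / bernWeight u x) ^ n
      ≤ ((2 ^ t : ℝ)⁻¹) ^ 2 * ∑ θ : Fin t → Bool, ∑ θ' : Fin t → Bool,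
          exp (∑ i, a i * (boolSign (θ i) * boolSign (θ' i))) := by
        gcongr with θ _ θ' _
        rw [hpair]
        exact one_add_pow_le_exp_sum_boolSign ht hu hα n θ θ'
    _ = ∏ i, cosh (a i) := by
        rw [sum_sum_exp_boolSign_mul, Fintype.card_fin, ← mul_assoc,
          show (4 : ℝ) ^ t = (2 ^ t) ^ 2 by rw [← pow_mul, mul_comm, pow_mul]; norm_num,
          ← mul_pow, inv_mul_cancel₀ (by positivity), one_pow, one_mul]
    _ ≤ ∏ i, exp (a i ^ 2 / 2) :=
        Finset.prod_le_prod (fun i _ => (cosh_pos _).le) fun i _ => cosh_le_exp_half_sq _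
    _ ≤ exp (11 * α ^ 4 * n ^ 2 / t) := by
        rw [← exp_sum, exp_le_exp]
        exact sum_sq_div_two_le ht hu n

end SignPerturbation

theorem stmt14 (t n : ℕ) (ht : 0 < t)
    (u : Fin t → ℝ) (hu : ∀ i, u i ∈ Set.Icc (1 / 3 : ℝ) (2 / 3))
    (α : ℝ) (hα : α ∈ Set.Ioo (0 : ℝ) (1 / 3)) :
    tvDist (Measure.pi fun _ : Fin n => bernMix t u u)
        (((2 : ℝ≥0∞) ^ t)⁻¹ •
          ∑ θ : Fin t → Bool,
            Measure.pi fun _ : Fin n =>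
              bernMix t u fun i => u i + (if θ i then (1 : ℝ) else -1) * α) ≤
      (1 / 2) * Real.sqrt (Real.exp (11 * α ^ 4 * n ^ 2 / t) - 1) := by
  obtain ⟨hα0, hα1⟩ := hα
  have hα' : |α| < 1 / 3 := abs_lt.mpr ⟨by linarith, hα1⟩
  have hu' : ∀ i, u i ∈ Set.Ioo (0 : ℝ) 1 := fun i =>
    ⟨by linarith [(hu i).1], by linarith [(hu i).2]⟩
  set Ψ := fun (y : Fin n → Fin t × Bool) k => (u (y k).1, (y k).2)
  set P := fun y : Fin n → Fin t × Bool => ∏ k, bernWeight u (y k)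
  calc _ = tvDist ((weightedDirac P).map Ψ) ((weightedDirac (perturbMixture u α n)).map Ψ) := by
        rw [pi_bernMix_eq_map u fun x => (bernWeight_pos ht hu' x).le,
          ← smul_sum_pi_bernMix_eq_map ht hu hα']
        rfl
    _ ≤ 1 / 2 * √(chiSq P (perturbMixture u α n)) :=
        tvDist_map_weightedDirac_le Ψ (fun y => Finset.prod_pos fun k _ => bernWeight_pos ht hu' _)
          (perturbMixture_nonneg ht hu hα') (sum_prod_eq_one (sum_bernWeight ht u) n)
          (sum_perturbMixture ht n)
    _ ≤ 1 / 2 * √(exp (11 * α ^ 4 * n ^ 2 / t) - 1) := by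
        gcongr
        exact chiSq_perturbMixture_le ht hu (by nlinarith) n

end
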